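/- Let {(X_n,Y_n)}_{n=1}^∞ be a sequence of independent and identically distributed random pairs, each distributed according to a pmf P_{XY} on a finite set 𝒳×𝒴. Then lim_{ε→0} limsup_{n→∞} H_0^ε(X^n|Y^n)/n = H(X|Y), the Shannon conditional entropy of X given Y. -/

import Mathlib

open scoped Classical BigOperators

/-- The conditional smooth max Rényi entropy of order zero,
`H₀^ε(A|B) = min_{Q ∈ B^ε(P_{AB})} log₂ max_{b} |Supp(Q(A|B = b))|`. -/
noncomputable def H0sm {α β : Type*} [Fintype α] [Fintype β]
    (ε : ℝ) (PAB : α × β → ℝ) : ℝ :=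
  sInf {r : ℝ | ∃ Q : α × β → ℝ,
    (∀ p, 0 ≤ Q p ∧ Q p ≤ PAB p) ∧ 1 - ε ≤ ∑ p, Q p ∧
    r = Real.logb 2
      (↑(Finset.univ.sup fun b : β =>
        (Finset.univ.filter fun a : α => 0 < Q (a, b)).card) : ℝ)}

open Finset Real Filter Topology

/-!
Let `ℓ(x, y) = -log₂ P(x|y)`, whose mean is `H(X|Y)`. Two one-shot bounds tie `H₀^ε` to the
distribution of `ℓ`. If `P(x|y) ≥ 2^{-r}` on a set `S` of mass `≥ 1 - ε`, then `P` restricted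
to `S` keeps at most `2^r` values of `x` for each `y`, so `H₀^ε ≤ r`. If `P(x|y) ≤ 2^{-r}` on a
set of mass `≥ 1 - η`, then any `Q ∈ B^ε(P)` puts mass `≥ 1 - ε - η` there; since
`Q(x, y) ≤ 2^{-r} P(y)` on that set, this mass is at most `2^{-r} K` when every conditional
support of `Q` has size `≤ K`, so `K ≥ 2^r (1 - ε - η)`.

For `n` i.i.d. pairs, `ℓ(xⁿ, yⁿ)` is a sum of `n` independent copies of `ℓ`, so by Chebyshev
`|ℓ(xⁿ, yⁿ) - n H| ≤ n δ` outside a set of mass `≤ Var ℓ / (n δ²)`. The two bounds then give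
`H₀^ε(Xⁿ|Yⁿ) / n → H(X|Y)` for every `0 < ε < 1`, so the limsup is constant near `ε = 0`.
-/

section

variable {α β γ : Type*} [Fintype α] [Fintype β] [Fintype γ]

noncomputable def maxSuppCard (Q : α × β → ℝ) : ℕ :=
  univ.sup fun b => (univ.filter fun a => 0 < Q (a, b)).card

theorem card_slice_le_maxSuppCard (Q : α × β → ℝ) (b : β) :
    (univ.filter fun a => 0 < Q (a, b)).card ≤ maxSuppCard Q :=
  le_sup (f := fun b => (univ.filter fun a => 0 < Q (a, b)).card) (mem_univ b)

theorem logb_natCast_nonneg (k : ℕ) : 0 ≤ logb 2 k :=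
  div_nonneg (log_natCast_nonneg k) (log_nonneg one_le_two)

theorem logb_natCast_le {k : ℕ} {r : ℝ} (hr : 0 ≤ r) (hk : (k : ℝ) ≤ 2 ^ r) : logb 2 k ≤ r := by
  rcases k.eq_zero_or_pos with rfl | hk0
  · simpa using hr
  · exact (logb_le_iff_le_rpow one_lt_two (by exact_mod_cast hk0)).2 hk

theorem H0sm_le_logb_maxSuppCard {ε : ℝ} {P Q : α × β → ℝ} (hQ : ∀ p, 0 ≤ Q p ∧ Q p ≤ P p)
    (hmass : 1 - ε ≤ ∑ p, Q p) : H0sm ε P ≤ logb 2 (maxSuppCard Q) :=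
  csInf_le ⟨0, by rintro _ ⟨Q, -, -, rfl⟩; exact logb_natCast_nonneg _⟩ ⟨Q, hQ, hmass, rfl⟩

theorem le_H0sm {ε r : ℝ} {P : α × β → ℝ} (hP0 : ∀ p, 0 ≤ P p) (hP : 1 - ε ≤ ∑ p, P p)
    (h : ∀ Q : α × β → ℝ, (∀ p, 0 ≤ Q p ∧ Q p ≤ P p) → 1 - ε ≤ ∑ p, Q p →
      r ≤ logb 2 (maxSuppCard Q)) :
    r ≤ H0sm ε P :=
  le_csInf ⟨_, P, fun p => ⟨hP0 p, le_rfl⟩, hP, rfl⟩ fun _ ⟨Q, hQ, hmass, hr⟩ => hr ▸ h Q hQ hmass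

theorem sum_le_maxSuppCard_mul {Q : α × β → ℝ} {w : β → ℝ} {S : Finset (α × β)}
    (hw : ∀ b, 0 ≤ w b) (hS : ∀ p ∈ S, Q p ≤ w p.2) :
    ∑ p ∈ S, Q p ≤ maxSuppCard Q * ∑ b, w b := by
  calc ∑ p ∈ S, Q p ≤ ∑ p, if 0 < Q p then w p.2 else 0 := by
        refine (sum_le_sum fun p hp => ?_).trans
          (sum_le_sum_of_subset_of_nonneg (subset_univ S) fun p _ _ => ?_)
        · split_ifs with h
          · exact hS p hp
          · exact not_lt.1 h
        · split_ifs <;> simp [hw]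
    _ = ∑ b, ((univ.filter fun a => 0 < Q (a, b)).card : ℝ) * w b := by
        rw [Fintype.sum_prod_type_right]
        simp only [← sum_filter, sum_const, nsmul_eq_mul]
    _ ≤ ∑ b, (maxSuppCard Q : ℝ) * w b := by
        gcongr with b
        · exact hw b
        · exact card_slice_le_maxSuppCard Q b
    _ = maxSuppCard Q * ∑ b, w b := (mul_sum _ _ _).symm

section OneShot

variable {P : α × β → ℝ} {PB : β → ℝ}

omit [Fintype β] in
theorem marginal_nonneg (hP0 : ∀ p, 0 ≤ P p) (hPB : ∀ b, PB b = ∑ a, P (a, b)) (b : β) :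
    0 ≤ PB b :=
  (hPB b).symm ▸ sum_nonneg fun a _ => hP0 (a, b)

omit [Fintype β] in
theorem le_marginal (hP0 : ∀ p, 0 ≤ P p) (hPB : ∀ b, PB b = ∑ a, P (a, b)) (p : α × β) :
    P p ≤ PB p.2 :=
  (hPB p.2).symm ▸ single_le_sum (fun a _ => hP0 (a, p.2)) (mem_univ p.1)

omit [Fintype β] in
theorem card_mul_le_one_of_le_condProb {A : Finset α} {b : β} {t : ℝ} (hP0 : ∀ p, 0 ≤ P p)
    (hPB : ∀ b, PB b = ∑ a, P (a, b)) (hA : ∀ a ∈ A, 0 < P (a, b) ∧ t * PB b ≤ P (a, b)) :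
    A.card * t ≤ 1 := by
  rcases A.eq_empty_or_nonempty with rfl | ⟨a₀, ha₀⟩
  · simp
  have hPBb : 0 < PB b := (hA a₀ ha₀).1.trans_le (le_marginal hP0 hPB (a₀, b))
  refine le_of_mul_le_mul_right ?_ hPBb
  calc A.card * t * PB b = A.card • (t * PB b) := by rw [nsmul_eq_mul, mul_assoc]
    _ ≤ ∑ a ∈ A, P (a, b) := card_nsmul_le_sum _ _ _ fun a ha => (hA a ha).2
    _ ≤ ∑ a, P (a, b) := sum_le_sum_of_subset_of_nonneg (subset_univ _) fun _ _ _ => hP0 _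
    _ = 1 * PB b := by rw [one_mul, hPB]

theorem H0sm_le_of_le_condProb {S : Finset (α × β)} {ε r : ℝ} (hP0 : ∀ p, 0 ≤ P p)
    (hPB : ∀ b, PB b = ∑ a, P (a, b)) (hr : 0 ≤ r)
    (hS : ∀ p ∈ S, 0 < P p → 2 ^ (-r) * PB p.2 ≤ P p) (hS1 : 1 - ε ≤ ∑ p ∈ S, P p) :
    H0sm ε P ≤ r := by
  set Q : α × β → ℝ := fun p => if p ∈ S then P p else 0
  have hQ : ∀ p, 0 ≤ Q p ∧ Q p ≤ P p := fun p => by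
    by_cases hp : p ∈ S <;> simp [Q, hp, hP0 p]
  have hmass : 1 - ε ≤ ∑ p, Q p := by rwa [sum_ite_mem, univ_inter]
  have hslice : ∀ b, ((univ.filter fun a => 0 < Q (a, b)).card : ℝ) ≤ 2 ^ r := fun b => by
    have := card_mul_le_one_of_le_condProb (A := univ.filter fun a => 0 < Q (a, b)) (b := b)
      (t := 2 ^ (-r)) hP0 hPB fun a ha => by
        have hQa : 0 < Q (a, b) := (mem_filter.1 ha).2
        by_cases h : (a, b) ∈ S
        · simp only [Q, if_pos h] at hQa
          exact ⟨hQa, hS _ h hQa⟩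
        · simp [Q, h] at hQa
    rwa [rpow_neg zero_le_two, ← div_eq_mul_inv, div_le_one (rpow_pos_of_pos two_pos r)] at this
  refine (H0sm_le_logb_maxSuppCard hQ hmass).trans (logb_natCast_le hr ?_)
  exact (Nat.cast_le.2 (Finset.sup_le fun b _ => Nat.le_floor (hslice b))).trans
    (Nat.floor_le (rpow_nonneg zero_le_two r))

theorem add_logb_le_H0sm_of_condProb_le {S : Finset (α × β)} {ε η r : ℝ} (hP0 : ∀ p, 0 ≤ P p)
    (hP1 : ∑ p, P p = 1) (hPB : ∀ b, PB b = ∑ a, P (a, b)) (hε : 0 ≤ ε) (hεη : ε + η < 1)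
    (hS : ∀ p ∈ S, P p ≤ 2 ^ (-r) * PB p.2) (hS1 : 1 - η ≤ ∑ p ∈ S, P p) :
    r + logb 2 (1 - ε - η) ≤ H0sm ε P := by
  refine le_H0sm hP0 (by linarith) fun Q hQ hmass => ?_
  have hPB1 : ∑ b, PB b = 1 := by
    simp only [hPB, ← hP1, Fintype.sum_prod_type_right]
  have htyp : ∑ p ∈ S, Q p ≤ maxSuppCard Q * 2 ^ (-r) := by
    simpa [← mul_sum, hPB1] using sum_le_maxSuppCard_mul
      (fun b => mul_nonneg (rpow_nonneg zero_le_two (-r)) (marginal_nonneg hP0 hPB b))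
      fun p hp => (hQ p).2.trans (hS p hp)
  have hatyp : ∑ p ∈ Sᶜ, Q p ≤ η := by
    have := sum_add_sum_compl S P
    linarith [sum_le_sum fun p (_ : p ∈ Sᶜ) => (hQ p).2]
  have hK : (1 - ε - η) * 2 ^ r ≤ maxSuppCard Q := by
    rw [← sum_add_sum_compl S Q] at hmass
    have := mul_le_mul_of_nonneg_right (by linarith : 1 - ε - η ≤ maxSuppCard Q * 2 ^ (-r))
      (rpow_nonneg zero_le_two r)
    rwa [mul_assoc, ← rpow_add two_pos, neg_add_cancel, rpow_zero, mul_one] at this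
  calc r + logb 2 (1 - ε - η) = logb 2 ((1 - ε - η) * 2 ^ r) := by
        rw [logb_mul (by linarith) (rpow_pos_of_pos two_pos r).ne',
          logb_rpow two_pos one_lt_two.ne', add_comm]
    _ ≤ logb 2 (maxSuppCard Q) :=
        logb_le_logb_of_le one_lt_two (mul_pos (by linarith) (rpow_pos_of_pos two_pos r)) hK

end OneShot

section Moments

theorem sum_filter_lt_abs_le {w f : γ → ℝ} (hw : ∀ c, 0 ≤ w c) {t : ℝ} (ht : 0 < t) :
    ∑ c ∈ univ.filter (fun c => t < |f c|), w c ≤ (∑ c, w c * f c ^ 2) / t ^ 2 := by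
  rw [le_div_iff₀ (by positivity), sum_mul]
  calc ∑ c ∈ univ.filter (fun c => t < |f c|), w c * t ^ 2
      ≤ ∑ c ∈ univ.filter (fun c => t < |f c|), w c * f c ^ 2 :=
        sum_le_sum fun c hc => mul_le_mul_of_nonneg_left
          (sq_abs (f c) ▸ pow_le_pow_left₀ ht.le (mem_filter.1 hc).2.le 2) (hw c)
    _ ≤ ∑ c, w c * f c ^ 2 := sum_le_sum_of_subset_of_nonneg (subset_univ _)
        fun c _ _ => mul_nonneg (hw c) (sq_nonneg _)

theorem sum_prod_mul_prod {n : ℕ} (μ : γ → ℝ) (f : Fin n → γ → ℝ) :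
    ∑ σ : Fin n → γ, (∏ i, μ (σ i)) * ∏ i, f i (σ i) = ∏ i, ∑ c, μ c * f i c := by
  simp_rw [← prod_mul_distrib]
  exact (Fintype.prod_sum fun i c => μ c * f i c).symm

variable {μ g : γ → ℝ}

theorem sum_prod_mul_mul_apply {n : ℕ} (hμ : ∑ c, μ c = 1) (hg : ∑ c, μ c * g c = 0)
    (i j : Fin n) :
    ∑ σ : Fin n → γ, (∏ k, μ (σ k)) * (g (σ i) * g (σ j)) =
      if i = j then ∑ c, μ c * g c ^ 2 else 0 := by
  -- `g (σ i) * g (σ j)` as a product over all coordinates, so that the sum factorises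
  have := sum_prod_mul_prod μ fun k c => (if k = i then g c else 1) * (if k = j then g c else 1)
  simp only [prod_mul_distrib, prod_ite_eq', mem_univ, if_true] at this
  rw [this]
  split_ifs with hij
  · subst hij
    rw [prod_eq_single_of_mem i (mem_univ i) fun k _ hk => by simp [hk, hμ]]
    simp [sq]
  · exact prod_eq_zero (mem_univ i) (by simp [hij, hg])

theorem sum_prod_mul_sum_sq (hμ : ∑ c, μ c = 1) (hg : ∑ c, μ c * g c = 0) (n : ℕ) :
    ∑ σ : Fin n → γ, (∏ i, μ (σ i)) * (∑ i, g (σ i)) ^ 2 = n * ∑ c, μ c * g c ^ 2 := by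
  calc ∑ σ : Fin n → γ, (∏ i, μ (σ i)) * (∑ i, g (σ i)) ^ 2
      = ∑ i, ∑ j, ∑ σ : Fin n → γ, (∏ k, μ (σ k)) * (g (σ i) * g (σ j)) := by
        simp_rw [sq, sum_mul_sum, mul_sum]
        rw [sum_comm]
        exact sum_congr rfl fun i _ => sum_comm
    _ = n * ∑ c, μ c * g c ^ 2 := by simp [sum_prod_mul_mul_apply hμ hg]

end Moments

noncomputable def condInfo (P : α × β → ℝ) (PB : β → ℝ) (p : α × β) : ℝ :=
  -logb 2 (P p / PB p.2)

noncomputable def condEntropy (P : α × β → ℝ) (PB : β → ℝ) : ℝ :=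
  ∑ p, P p * condInfo P PB p

noncomputable def condInfoVar (P : α × β → ℝ) (PB : β → ℝ) : ℝ :=
  ∑ p, P p * (condInfo P PB p - condEntropy P PB) ^ 2

def iidPow (P : α × β → ℝ) (n : ℕ) (p : (Fin n → α) × (Fin n → β)) : ℝ :=
  ∏ i, P (p.1 i, p.2 i)

noncomputable def typicalSet (P : α × β → ℝ) (PB : β → ℝ) (n : ℕ) (δ : ℝ) :
    Finset ((Fin n → α) × (Fin n → β)) :=
  univ.filter fun p => |∑ i, condInfo P PB (p.1 i, p.2 i) - n * condEntropy P PB| ≤ n * δ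

section Iid

variable {P : α × β → ℝ} {PB : β → ℝ}

omit [Fintype β] in
theorem rpow_neg_condInfo_mul (hP0 : ∀ p, 0 ≤ P p) (hPB : ∀ b, PB b = ∑ a, P (a, b))
    {p : α × β} (hp : 0 < P p) : 2 ^ (-condInfo P PB p) * PB p.2 = P p := by
  have hPBp : 0 < PB p.2 := hp.trans_le (le_marginal hP0 hPB p)
  rw [condInfo, neg_neg, rpow_logb two_pos one_lt_two.ne' (div_pos hp hPBp),
    div_mul_cancel₀ _ hPBp.ne']

omit [Fintype β] in
theorem condInfo_nonneg (hP0 : ∀ p, 0 ≤ P p) (hPB : ∀ b, PB b = ∑ a, P (a, b)) (p : α × β) :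
    0 ≤ condInfo P PB p :=
  neg_nonneg.2 <| logb_nonpos one_lt_two (div_nonneg (hP0 p) (marginal_nonneg hP0 hPB _))
    (div_le_one_of_le₀ (le_marginal hP0 hPB p) (marginal_nonneg hP0 hPB _))

theorem condEntropy_nonneg (hP0 : ∀ p, 0 ≤ P p) (hPB : ∀ b, PB b = ∑ a, P (a, b)) :
    0 ≤ condEntropy P PB :=
  sum_nonneg fun p _ => mul_nonneg (hP0 p) (condInfo_nonneg hP0 hPB p)

omit [Fintype α] [Fintype β] in
theorem iidPow_nonneg (hP0 : ∀ p, 0 ≤ P p) (n : ℕ) (p : (Fin n → α) × (Fin n → β)) :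
    0 ≤ iidPow P n p :=
  prod_nonneg fun _ _ => hP0 _

omit [Fintype β] in
theorem sum_iidPow_fst (hPB : ∀ b, PB b = ∑ a, P (a, b)) (n : ℕ) (y : Fin n → β) :
    ∑ x, iidPow P n (x, y) = ∏ i, PB (y i) := by
  simp only [iidPow, hPB]
  exact (Fintype.prod_sum fun i a => P (a, y i)).symm

theorem sum_prodArrow_eq_sum_arrowProd (n : ℕ) (F : (Fin n → α × β) → ℝ) :
    ∑ p : (Fin n → α) × (Fin n → β), F (fun i => (p.1 i, p.2 i)) = ∑ σ, F σ :=
  Fintype.sum_equiv (Equiv.arrowProdEquivProdArrow _ _ _).symm _ _ fun _ => rfl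

theorem sum_iidPow (hP1 : ∑ p, P p = 1) (n : ℕ) : ∑ p, iidPow P n p = 1 := by
  unfold iidPow
  rw [sum_prodArrow_eq_sum_arrowProd n fun σ => ∏ i, P (σ i), ← Fintype.prod_sum fun _ c => P c]
  simp [hP1]

theorem sum_iidPow_deviation_le (hP0 : ∀ p, 0 ≤ P p) (hP1 : ∑ p, P p = 1) {g : α × β → ℝ}
    (hg : ∑ p, P p * g p = 0) {n : ℕ} (hn : 0 < n) {δ : ℝ} (hδ : 0 < δ) :
    ∑ p ∈ univ.filter (fun p => n * δ < |∑ i, g (p.1 i, p.2 i)|), iidPow P n p ≤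
      (∑ p, P p * g p ^ 2) / (n * δ ^ 2) := by
  refine (sum_filter_lt_abs_le (iidPow_nonneg hP0 n) (by positivity)).trans_eq ?_
  unfold iidPow
  rw [sum_prodArrow_eq_sum_arrowProd n fun σ => (∏ i, P (σ i)) * (∑ i, g (σ i)) ^ 2,
    sum_prod_mul_sum_sq hP1 hg]
  field_simp

theorem one_sub_le_sum_iidPow_typicalSet (hP0 : ∀ p, 0 ≤ P p) (hP1 : ∑ p, P p = 1) {n : ℕ}
    (hn : 0 < n) {δ : ℝ} (hδ : 0 < δ) :
    1 - condInfoVar P PB / (n * δ ^ 2) ≤ ∑ p ∈ typicalSet P PB n δ, iidPow P n p := by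
  have hcenter : ∀ p : (Fin n → α) × (Fin n → β),
      ∑ i, condInfo P PB (p.1 i, p.2 i) - n * condEntropy P PB =
        ∑ i, (condInfo P PB (p.1 i, p.2 i) - condEntropy P PB) := by
    simp [sum_sub_distrib]
  have hg : ∑ p, P p * (condInfo P PB p - condEntropy P PB) = 0 := by
    simp [mul_sub, sum_sub_distrib, ← sum_mul, hP1, condEntropy]
  have hdev := sum_iidPow_deviation_le hP0 hP1 hg hn hδ
  simp only [← hcenter] at hdev
  have hsplit := sum_add_sum_compl (typicalSet P PB n δ) (iidPow P n)
  rw [sum_iidPow hP1, typicalSet, compl_filter] at hsplit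
  simp only [not_le] at hsplit
  rw [condInfoVar, typicalSet]
  linarith

omit [Fintype β] in
theorem iidPow_eq_rpow_mul (hP0 : ∀ p, 0 ≤ P p) (hPB : ∀ b, PB b = ∑ a, P (a, b)) {n : ℕ}
    {p : (Fin n → α) × (Fin n → β)} (hp : 0 < iidPow P n p) :
    iidPow P n p = 2 ^ (-∑ i, condInfo P PB (p.1 i, p.2 i)) * ∏ i, PB (p.2 i) := by
  have hpos : ∀ i, 0 < P (p.1 i, p.2 i) := fun i =>
    (hP0 _).lt_of_ne fun h => hp.ne' (prod_eq_zero (mem_univ i) h.symm)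
  rw [← sum_neg_distrib, rpow_sum_of_pos two_pos, ← prod_mul_distrib]
  exact prod_congr rfl fun i _ => (rpow_neg_condInfo_mul hP0 hPB (hpos i)).symm

theorem le_iidPow_of_mem_typicalSet (hP0 : ∀ p, 0 ≤ P p) (hPB : ∀ b, PB b = ∑ a, P (a, b))
    {n : ℕ} {δ : ℝ} {p : (Fin n → α) × (Fin n → β)} (hT : p ∈ typicalSet P PB n δ)
    (hp : 0 < iidPow P n p) :
    2 ^ (-(n * (condEntropy P PB + δ))) * ∏ i, PB (p.2 i) ≤ iidPow P n p := by
  have hinfo := (abs_le.1 (mem_filter.1 hT).2).2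
  rw [iidPow_eq_rpow_mul hP0 hPB hp]
  gcongr
  · exact prod_nonneg fun i _ => marginal_nonneg hP0 hPB _
  · exact one_le_two
  · linarith

theorem iidPow_le_of_mem_typicalSet (hP0 : ∀ p, 0 ≤ P p) (hPB : ∀ b, PB b = ∑ a, P (a, b))
    {n : ℕ} {δ : ℝ} {p : (Fin n → α) × (Fin n → β)} (hT : p ∈ typicalSet P PB n δ) :
    iidPow P n p ≤ 2 ^ (-(n * (condEntropy P PB - δ))) * ∏ i, PB (p.2 i) := by
  have hPBn : 0 ≤ ∏ i, PB (p.2 i) := prod_nonneg fun i _ => marginal_nonneg hP0 hPB _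
  rcases (iidPow_nonneg hP0 n p).eq_or_lt with hp | hp
  · exact hp ▸ mul_nonneg (rpow_nonneg zero_le_two _) hPBn
  have hinfo := (abs_le.1 (mem_filter.1 hT).2).1
  rw [iidPow_eq_rpow_mul hP0 hPB hp]
  gcongr
  · exact one_le_two
  · linarith

theorem H0sm_iidPow_le (hP0 : ∀ p, 0 ≤ P p) (hP1 : ∑ p, P p = 1)
    (hPB : ∀ b, PB b = ∑ a, P (a, b)) {n : ℕ} (hn : 0 < n) {ε δ : ℝ} (hδ : 0 < δ)
    (hε : condInfoVar P PB / (n * δ ^ 2) ≤ ε) :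
    H0sm ε (iidPow P n) ≤ n * (condEntropy P PB + δ) :=
  H0sm_le_of_le_condProb (iidPow_nonneg hP0 n) (fun y => (sum_iidPow_fst hPB n y).symm)
    (mul_nonneg n.cast_nonneg (add_nonneg (condEntropy_nonneg hP0 hPB) hδ.le))
    (fun _ hT hp => le_iidPow_of_mem_typicalSet hP0 hPB hT hp)
    (by linarith [one_sub_le_sum_iidPow_typicalSet (PB := PB) hP0 hP1 hn hδ])

theorem le_H0sm_iidPow (hP0 : ∀ p, 0 ≤ P p) (hP1 : ∑ p, P p = 1)
    (hPB : ∀ b, PB b = ∑ a, P (a, b)) {n : ℕ} (hn : 0 < n) {ε δ : ℝ} (hδ : 0 < δ) (hε : 0 ≤ ε)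
    (hεV : ε + condInfoVar P PB / (n * δ ^ 2) < 1) :
    n * (condEntropy P PB - δ) + logb 2 (1 - ε - condInfoVar P PB / (n * δ ^ 2)) ≤
      H0sm ε (iidPow P n) :=
  add_logb_le_H0sm_of_condProb_le (iidPow_nonneg hP0 n) (sum_iidPow hP1 n)
    (fun y => (sum_iidPow_fst hPB n y).symm) hε hεV
    (fun _ hT => iidPow_le_of_mem_typicalSet hP0 hPB hT)
    (one_sub_le_sum_iidPow_typicalSet hP0 hP1 hn hδ)

theorem tendsto_H0sm_iidPow_div (hP0 : ∀ p, 0 ≤ P p) (hP1 : ∑ p, P p = 1)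
    (hPB : ∀ b, PB b = ∑ a, P (a, b)) {ε : ℝ} (hε0 : 0 < ε) (hε1 : ε < 1) :
    Tendsto (fun n : ℕ => H0sm ε (iidPow P (n + 1)) / (n + 1)) atTop
      (𝓝 (condEntropy P PB)) := by
  set H := condEntropy P PB
  set V := condInfoVar P PB
  have hden : Tendsto (fun n : ℕ => (n : ℝ) + 1) atTop atTop :=
    tendsto_atTop_add_const_right _ 1 tendsto_natCast_atTop_atTop
  have hdev : ∀ δ, Tendsto (fun n : ℕ => V / (((n : ℝ) + 1) * δ ^ 2)) atTop (𝓝 0) := fun δ => by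
    simpa only [div_mul_eq_div_div_swap] using (tendsto_const_nhds (x := V / δ ^ 2)).div_atTop hden
  rw [tendsto_order]
  constructor
  · intro a ha
    set δ := (H - a) / 2 with hδ
    have hlow : Tendsto (fun n : ℕ =>
        H - δ + logb 2 (1 - ε - V / (((n : ℝ) + 1) * δ ^ 2)) / ((n : ℝ) + 1)) atTop
        (𝓝 (H - δ)) := by
      simpa using tendsto_const_nhds.add
        (((tendsto_const_nhds.sub (hdev δ)).logb (by simp; linarith)).div_atTop hden)
    filter_upwards [hlow.eventually (lt_mem_nhds (by linarith : a < H - δ)),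
      (hdev δ).eventually (gt_mem_nhds (by linarith : 0 < 1 - ε))] with n hlt hsmall
    have := le_H0sm_iidPow hP0 hP1 hPB n.succ_pos (by linarith : 0 < δ) hε0.le
      (by push_cast; linarith)
    push_cast at this
    refine hlt.trans_le ?_
    rw [le_div_iff₀ (by positivity), add_mul, div_mul_cancel₀ _ (by positivity)]
    linarith
  · intro b hb
    filter_upwards [(hdev ((b - H) / 2)).eventually (ge_mem_nhds hε0)] with n hn
    have := H0sm_iidPow_le hP0 hP1 hPB n.succ_pos (by linarith : 0 < (b - H) / 2)
      (by push_cast; exact hn)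
    push_cast at this
    rw [div_lt_iff₀ (by positivity)]
    nlinarith

end Iid

end

/-- for i.i.d. pairs `(X_i, Y_i) ~ P_{XY}`,
`lim_{ε→0⁺} limsup_n H₀^ε(X^n|Y^n)/n = H(X|Y)`, the Shannon conditional entropy
`H(X|Y) = −∑_{x,y} P_{XY}(x,y) log₂ P_{X|Y}(x|y)`. -/
theorem smooth_conditional_entropy_rate_iid_eq_shannon
    {X Y : Type*} [Fintype X] [Fintype Y]
    (PXY : X × Y → ℝ)
    (hP0 : ∀ p, 0 ≤ PXY p) (hP1 : ∑ p, PXY p = 1)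
    (PY : Y → ℝ) (hPY : ∀ y, PY y = ∑ x, PXY (x, y)) :
    Filter.Tendsto
      (fun ε : ℝ =>
        Filter.limsup
          (fun n =>
            H0sm ε (fun p : (Fin (n + 1) → X) × (Fin (n + 1) → Y) =>
              ∏ i, PXY (p.1 i, p.2 i)) / (n + 1))
          Filter.atTop)
      (nhdsWithin 0 (Set.Ioi 0))
      (nhds (-∑ p : X × Y, PXY p * Real.logb 2 (PXY p / PY p.2))) := by
  have hH : condEntropy PXY PY = -∑ p, PXY p * logb 2 (PXY p / PY p.2) := by
    simp [condEntropy, condInfo]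
  rw [← hH]
  refine tendsto_const_nhds.congr' ?_
  filter_upwards [Ioo_mem_nhdsGT one_pos] with ε hε
  exact ((tendsto_H0sm_iidPow_div hP0 hP1 hPY hε.1 hε.2).limsup_eq).symm
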